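/- For m ≥ 3 and any graph H_n of order n ≥ 2, rvc(K_m ⋄ H_n) = ⌈m/3⌉. -/

import Mathlib

open SimpleGraph

/-- A walk is a rainbow vertex path: it is a path and its internal vertices
receive pairwise distinct colors. -/
def IsRainbowPath {V : Type*} (G : SimpleGraph V) {k : ℕ} (c : V → Fin k)
    {u v : V} (p : G.Walk u v) : Prop :=
  p.IsPath ∧ (p.support.tail.dropLast.map c).Nodup

/-- A rainbow vertex coloring: every two vertices are joined by a rainbow vertex path. -/
def IsRVColoring {V : Type*} (G : SimpleGraph V) {k : ℕ} (c : V → Fin k) : Prop :=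
  ∀ u v : V, ∃ p : G.Walk u v, IsRainbowPath G c p

/-- The rainbow vertex connection number. -/
noncomputable def rvc {V : Type*} (G : SimpleGraph V) : ℕ :=
  sInf {k | ∃ c : V → Fin k, IsRVColoring G c}

/-- The rainbow code of a vertex: its vector of distances to the color classes. -/
noncomputable def rainbowCode {V : Type*} (G : SimpleGraph V) {k : ℕ}
    (c : V → Fin k) (v : V) : Fin k → ℕ :=
  fun i => sInf {d | ∃ w, c w = i ∧ G.dist v w = d}

/-- A locating rainbow coloring: a rainbow vertex coloring whose rainbow codes
are pairwise distinct. -/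
def IsLocatingRVColoring {V : Type*} (G : SimpleGraph V) {k : ℕ} (c : V → Fin k) : Prop :=
  IsRVColoring G c ∧ Function.Injective (rainbowCode G c)

/-- The locating rainbow connection number. -/
noncomputable def rvcl {V : Type*} (G : SimpleGraph V) : ℕ :=
  sInf {k | ∃ c : V → Fin k, IsLocatingRVColoring G c}

/-- The edge corona `G ⋄ H`: one copy of `G` together with one copy of `H`
for each edge of `G`, where both endpoints of the edge are joined to
every vertex of the corresponding copy of `H`. -/
def edgeCorona {V W : Type*} (G : SimpleGraph V) (H : SimpleGraph W) :
    SimpleGraph (V ⊕ (G.edgeSet × W)) where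
  Adj x y :=
    match x, y with
    | .inl u, .inl v => G.Adj u v
    | .inl u, .inr (e, _) => u ∈ (e : Sym2 V)
    | .inr (e, _), .inl u => u ∈ (e : Sym2 V)
    | .inr (e, w), .inr (e', w') => e = e' ∧ H.Adj w w'
  symm := by
    constructor
    rintro (u | ⟨e, w⟩) (v | ⟨e', w'⟩) h
    · exact h.symm
    · exact h
    · exact h
    · exact ⟨h.1.symm, h.2.symm⟩
  loopless := by
    constructor
    rintro (u | ⟨e, w⟩) h
    · exact G.irrefl h
    · exact H.irrefl h.2

/-- A cut vertex: a vertex whose removal disconnects the graph. -/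
def IsCutVertex {V : Type*} (G : SimpleGraph V) (v : V) : Prop :=
  ¬ (G.induce {u | u ≠ v}).Connected

/-!
A path joining the copies of `H` on two disjoint edges `ab` and `a'b'` of `K_m` passes through
one of `a, b` and one of `a', b'` as internal vertices, so no rainbow coloring gives four vertices
of `K_m` the same color. Conversely, if every color class of `K_m` has at most three vertices,
any two vertices of the corona are joined by a path with at most two internal vertices, both in
`K_m` and, when there are two, chosen with different colors. Hence `k` colors suffice exactly
when `m ≤ 3k`.
-/

section RainbowPath

variable {V : Type*} {G : SimpleGraph V} {k : ℕ} {u v x y : V}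

theorem IsRainbowPath.reverse {c : V → Fin k} {p : G.Walk u v} (hp : IsRainbowPath G c p) :
    IsRainbowPath G c p.reverse := by
  refine ⟨hp.1.reverse, ?_⟩
  simpa [Walk.support_reverse, List.tail_reverse, List.dropLast_reverse, List.tail_dropLast]
    using hp.2

theorem SimpleGraph.Walk.mem_support_tail_dropLast {p : G.Walk u v} {z : V} (hz : z ∈ p.support)
    (hzu : z ≠ u) (hzv : z ≠ v) : z ∈ p.support.tail.dropLast := by
  cases p with
  | nil => exact absurd (by simpa using hz) hzu
  | cons _ q =>
    rw [support_cons, List.tail_cons]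
    rw [support_cons, List.mem_cons, ← q.dropLast_support_concat] at hz
    simp only [List.mem_append, List.mem_singleton] at hz
    tauto

variable (c : V → Fin k)

theorem exists_isRainbowPath_of_adj (h : G.Adj u v) : ∃ p : G.Walk u v, IsRainbowPath G c p :=
  ⟨.cons h .nil, by simp [IsRainbowPath, Walk.isPath_def, h.ne]⟩

theorem exists_isRainbowPath_of_adj_of_adj (hux : G.Adj u x) (hxv : G.Adj x v) (huv : u ≠ v) :
    ∃ p : G.Walk u v, IsRainbowPath G c p :=
  ⟨.cons hux (.cons hxv .nil), by simp [IsRainbowPath, Walk.isPath_def, hux.ne, hxv.ne, huv]⟩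

theorem exists_isRainbowPath_of_adj_of_adj_of_adj (hux : G.Adj u x) (hxy : G.Adj x y)
    (hyv : G.Adj y v) (huv : u ≠ v) (huy : u ≠ y) (hxv : x ≠ v) (hc : c x ≠ c y) :
    ∃ p : G.Walk u v, IsRainbowPath G c p :=
  ⟨.cons hux (.cons hxy (.cons hyv .nil)), by
    simp [IsRainbowPath, Walk.isPath_def, hux.ne, hxy.ne, hyv.ne, huv, huy, hxv, hc]⟩

end RainbowPath

section EdgeCorona

variable {V W : Type*} {G : SimpleGraph V} {H : SimpleGraph W}

@[simp]
theorem edgeCorona_adj_inl_inl {u v : V} :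
    (edgeCorona G H).Adj (.inl u) (.inl v) ↔ G.Adj u v := Iff.rfl

@[simp]
theorem edgeCorona_adj_inl_inr {u : V} {e : G.edgeSet} {w : W} :
    (edgeCorona G H).Adj (.inl u) (.inr (e, w)) ↔ u ∈ (e : Sym2 V) := Iff.rfl

@[simp]
theorem edgeCorona_adj_inr_inl {u : V} {e : G.edgeSet} {w : W} :
    (edgeCorona G H).Adj (.inr (e, w)) (.inl u) ↔ u ∈ (e : Sym2 V) := Iff.rfl

@[simp]
theorem edgeCorona_adj_inr_inr {e e' : G.edgeSet} {w w' : W} :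
    (edgeCorona G H).Adj (.inr (e, w)) (.inr (e', w')) ↔ e = e' ∧ H.Adj w w' := Iff.rfl

theorem edgeCorona_exists_inl_mem_support {e : G.edgeSet} {w : W} {v : V ⊕ (G.edgeSet × W)}
    (p : (edgeCorona G H).Walk (.inr (e, w)) v) (hv : ∀ w', v ≠ .inr (e, w')) :
    ∃ x ∈ (e : Sym2 V), .inl x ∈ p.support := by
  obtain ⟨d, hd, ⟨w₁, hw₁⟩, hout⟩ :=
    p.exists_boundary_dart {z | ∃ w', z = .inr (e, w')} ⟨w, rfl⟩ (by simpa using hv)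
  have hadj := d.adj
  rw [hw₁] at hadj
  rcases hsnd : d.snd with x | ⟨e', w'⟩
  · rw [hsnd] at hadj
    exact ⟨x, hadj, hsnd ▸ p.dart_snd_mem_support_of_mem_darts hd⟩
  · rw [hsnd] at hadj hout
    exact absurd ⟨w', by rw [(edgeCorona_adj_inr_inr.mp hadj).1]⟩ hout

theorem not_isRVColoring_edgeCorona [Nonempty W] {k : ℕ} (c : V ⊕ (G.edgeSet × W) → Fin k)
    {e e' : G.edgeSet} (hdisj : ∀ x ∈ (e : Sym2 V), x ∉ (e' : Sym2 V))
    (hc : ∀ x ∈ (e : Sym2 V), ∀ y ∈ (e' : Sym2 V), c (.inl x) = c (.inl y)) :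
    ¬ IsRVColoring (edgeCorona G H) c := by
  intro hrv
  obtain ⟨w⟩ := ‹Nonempty W›
  have hne : e ≠ e' := fun h => hdisj _ (Sym2.out_fst_mem _) (h ▸ Sym2.out_fst_mem _)
  obtain ⟨p, hp, hnodup⟩ := hrv (.inr (e, w)) (.inr (e', w))
  obtain ⟨x, hx, hxp⟩ := edgeCorona_exists_inl_mem_support p (by simp [Ne.symm hne])
  obtain ⟨y, hy, hyp⟩ := edgeCorona_exists_inl_mem_support p.reverse (by simp [hne])
  rw [Walk.support_reverse, List.mem_reverse] at hyp
  have hxy : (.inl x : V ⊕ (G.edgeSet × W)) ≠ .inl y := by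
    simpa using fun h : x = y => hdisj x hx (h ▸ hy)
  exact hxy (List.inj_on_of_nodup_map hnodup
    (Walk.mem_support_tail_dropLast hxp (by simp) (by simp))
    (Walk.mem_support_tail_dropLast hyp (by simp) (by simp)) (hc x hx y hy))

end EdgeCorona

section CompleteGraph

open Finset

variable {V W : Type*} [Fintype V] (H : SimpleGraph W) {k : ℕ}

theorem exists_color_ne_of_card_fiber_le_three {c : V → Fin k} (hc : ∀ i, #{v | c v = i} ≤ 3)
    {e e' : (⊤ : SimpleGraph V).edgeSet} (hdisj : ∀ x ∈ (e : Sym2 V), x ∉ (e' : Sym2 V)) :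
    ∃ x ∈ (e : Sym2 V), ∃ y ∈ (e' : Sym2 V), c x ≠ c y := by
  by_contra! hcol
  obtain ⟨e, he⟩ := e
  obtain ⟨e', he'⟩ := e'
  induction e using Sym2.ind with | _ a b => ?_
  induction e' using Sym2.ind with | _ a' b' => ?_
  rw [mem_edgeSet, top_adj] at he he'
  simp only [Sym2.mem_iff, forall_eq_or_imp, forall_eq] at hdisj hcol
  have : 3 < #{v | c v = c a} := by
    refine three_lt_card.mpr ⟨a, ?_, b, ?_, a', ?_, b', ?_, ?_⟩ <;> grind
  exact (hc (c a)).not_gt this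

theorem isRVColoring_edgeCorona_top (c : V ⊕ ((⊤ : SimpleGraph V).edgeSet × W) → Fin k)
    (hc : ∀ i, #{v | c (.inl v) = i} ≤ 3) : IsRVColoring (edgeCorona ⊤ H) c := by
  have hinl_inr (i : V) (e : (⊤ : SimpleGraph V).edgeSet) (w : W) :
      ∃ p : (edgeCorona ⊤ H).Walk (.inl i) (.inr (e, w)), IsRainbowPath _ c p := by
    by_cases hi : i ∈ (e : Sym2 V)
    · exact exists_isRainbowPath_of_adj c (edgeCorona_adj_inl_inr.2 hi)
    · have ha := Sym2.out_fst_mem (e : Sym2 V)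
      exact exists_isRainbowPath_of_adj_of_adj c
        (edgeCorona_adj_inl_inl.2 ((top_adj _ _).2 fun h => hi (h ▸ ha)))
        (edgeCorona_adj_inl_inr.2 ha) (by simp)
  intro u v
  by_cases huv : u = v
  · subst huv
    exact ⟨.nil, by simp [IsRainbowPath]⟩
  rcases u with i | ⟨e, w⟩ <;> rcases v with j | ⟨e', w'⟩
  · exact exists_isRainbowPath_of_adj c
      (edgeCorona_adj_inl_inl.2 ((top_adj _ _).2 (by simpa using huv)))
  · exact hinl_inr i e' w'
  · obtain ⟨p, hp⟩ := hinl_inr j e w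
    exact ⟨p.reverse, hp.reverse⟩
  · by_cases hshared : ∃ x ∈ (e : Sym2 V), x ∈ (e' : Sym2 V)
    · obtain ⟨x, hx, hx'⟩ := hshared
      exact exists_isRainbowPath_of_adj_of_adj c (edgeCorona_adj_inr_inl.2 hx)
        (edgeCorona_adj_inl_inr.2 hx') huv
    · simp only [not_exists, not_and] at hshared
      obtain ⟨x, hx, y, hy, hxy⟩ :=
        exists_color_ne_of_card_fiber_le_three (c := c ∘ .inl) hc hshared
      exact exists_isRainbowPath_of_adj_of_adj_of_adj c (edgeCorona_adj_inr_inl.2 hx)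
        (edgeCorona_adj_inl_inl.2 ((top_adj _ _).2 fun h => hxy (congrArg _ h)))
        (edgeCorona_adj_inl_inr.2 hy) huv (by simp) (by simp) hxy

theorem isRVColoring_edgeCorona_top_iff [Nonempty W]
    (c : V ⊕ ((⊤ : SimpleGraph V).edgeSet × W) → Fin k) :
    IsRVColoring (edgeCorona ⊤ H) c ↔ ∀ i, #{v | c (.inl v) = i} ≤ 3 := by
  refine ⟨fun hrv i => ?_, isRVColoring_edgeCorona_top H c⟩
  by_contra! hi
  obtain ⟨a, ha, b, hb, a', ha', b', hb', hab, haa', hab', hba', hbb', ha'b'⟩ :=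
    three_lt_card.mp hi
  simp only [mem_filter, mem_univ, true_and] at ha hb ha' hb'
  refine not_isRVColoring_edgeCorona c (e := ⟨s(a, b), by simpa⟩)
    (e' := ⟨s(a', b'), by simpa⟩) ?_ ?_ hrv
  · simp only [Sym2.mem_iff]
    grind
  · simp only [Sym2.mem_iff]
    grind

theorem exists_isRVColoring_edgeCorona_top_iff [Nonempty W] {m : ℕ} (hm : 0 < m) :
    (∃ c : Fin m ⊕ ((⊤ : SimpleGraph (Fin m)).edgeSet × W) → Fin k,
      IsRVColoring (edgeCorona ⊤ H) c) ↔ m ≤ 3 * k := by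
  simp only [isRVColoring_edgeCorona_top_iff]
  constructor
  · rintro ⟨c, hc⟩
    simpa using card_le_mul_card_image_of_maps_to (s := univ) (t := univ) (f := c ∘ .inl)
      (fun _ _ => mem_univ _) 3 fun i _ => hc i
  · intro hmk
    have hk : 0 < k := by omega
    refine ⟨Sum.elim (fun v => ⟨v / 3, by omega⟩) fun _ => ⟨0, hk⟩, fun i => ?_⟩
    calc #{v : Fin m | (⟨v / 3, _⟩ : Fin k) = i}
        ≤ #(Ico (3 * (i : ℕ)) (3 * i + 3)) :=
          card_le_card_of_injOn Fin.val
            (fun v hv => by obtain rfl := (mem_filter.mp hv).2; simp; omega)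
            Fin.val_injective.injOn
      _ = 3 := by simp

end CompleteGraph

theorem Nat.sInf_setOf_le_three_mul (m : ℕ) : sInf {k | m ≤ 3 * k} = (m + 2) / 3 :=
  le_antisymm (Nat.sInf_le (by simp only [Set.mem_ofPred_eq]; omega))
    (le_csInf ⟨m, by simp only [Set.mem_ofPred_eq]; omega⟩ fun k hk => by
      simp only [Set.mem_ofPred_eq] at hk; omega)

theorem stmt16 {W : Type*} [Fintype W] (H : SimpleGraph W) (m n : ℕ)
    (hm : 3 ≤ m) (hn : Fintype.card W = n) (hn2 : 2 ≤ n) :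
    rvc (edgeCorona (⊤ : SimpleGraph (Fin m)) H) = (m + 2) / 3 := by
  have : Nonempty W := Fintype.card_pos_iff.mp (by omega)
  have hset : {k | ∃ c, IsRVColoring (edgeCorona (⊤ : SimpleGraph (Fin m)) H) c} =
      {k | m ≤ 3 * k} :=
    Set.ext fun _ => exists_isRVColoring_edgeCorona_top_iff H (by omega)
  rw [rvc, hset, Nat.sInf_setOf_le_three_mul]
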